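/- arXiv:1411.1323 — 2 statements merged into one kernel-verified Lean document; each statement's English description precedes it below -/
import Mathlib

section
/- Let A, P ∈ M_m(ℝ) with P symmetric positive definite satisfying A P + P Aᵀ + B Bᵀ = 0, and suppose λ is an eigenvalue of Aᵀ with eigenvector γ ∈ ℂ^m such that Bᵀγ ≠ 0. Then Re(λ) < 0. -/
/-!
Pair the Lyapunov equation with the eigenvector `γ` of `Aᵀ`: the quadratic form
`γ* (A P + P Aᵀ + B Bᵀ) γ` equals `2 Re(λ) · γ* P γ + ‖Bᵀ γ‖²`. Since it vanishes, `γ* P γ > 0`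
and `‖Bᵀ γ‖² > 0`, the real part of `λ` must be negative.
-/

open Matrix
open scoped ComplexOrder

namespace Matrix

variable {n m : Type*}

section RCLike

variable {𝕜 : Type*} [RCLike 𝕜] [Fintype n] [Fintype m]

lemma star_dotProduct_conjTranspose_mulVec (M : Matrix n n 𝕜) (v : n → 𝕜) :
    star v ⬝ᵥ (Mᴴ *ᵥ v) = star (star v ⬝ᵥ (M *ᵥ v)) := by
  rw [star_dotProduct, star_mulVec, conjTranspose_conjTranspose, ← dotProduct_mulVec]

lemma star_dotProduct_mul_conjTranspose_mulVec (B : Matrix n m 𝕜) (v : n → 𝕜) :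
    star v ⬝ᵥ ((B * Bᴴ) *ᵥ v) = star (Bᴴ *ᵥ v) ⬝ᵥ (Bᴴ *ᵥ v) := by
  rw [← mulVec_mulVec, dotProduct_mulVec, star_mulVec, conjTranspose_conjTranspose]

theorem re_lt_zero_of_lyapunov {A P : Matrix n n 𝕜} {B : Matrix n m 𝕜} (hP : P.PosDef)
    (hLyap : A * P + P * Aᴴ + B * Bᴴ = 0) {μ : 𝕜} {v : n → 𝕜} (hv : Aᴴ *ᵥ v = μ • v)
    (hBv : Bᴴ *ᵥ v ≠ 0) : RCLike.re μ < 0 := by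
  have hv0 : v ≠ 0 := by rintro rfl; simp at hBv
  obtain ⟨r, hr, hc⟩ := RCLike.pos_iff_exists_ofReal.mp (hP.dotProduct_mulVec_pos hv0)
  have hw : 0 < RCLike.re (star (Bᴴ *ᵥ v) ⬝ᵥ (Bᴴ *ᵥ v)) :=
    (RCLike.pos_iff.mp (dotProduct_star_self_pos_iff.mpr hBv)).1
  have hPA : star v ⬝ᵥ ((P * Aᴴ) *ᵥ v) = μ * r := by
    rw [← mulVec_mulVec, hv, mulVec_smul, dotProduct_smul, smul_eq_mul, hc]
  have hAP : star v ⬝ᵥ ((A * P) *ᵥ v) = star (μ * r) := by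
    rw [← hPA, ← star_dotProduct_conjTranspose_mulVec, conjTranspose_mul, hP.isHermitian.eq,
      conjTranspose_conjTranspose]
  have hform := congrArg (fun M ↦ RCLike.re (star v ⬝ᵥ (M *ᵥ v))) hLyap
  simp only [add_mulVec, dotProduct_add, hPA, hAP, star_dotProduct_mul_conjTranspose_mulVec,
    map_add, zero_mulVec, dotProduct_zero, map_zero, RCLike.star_def, RCLike.conj_re,
    RCLike.re_mul_ofReal] at hform
  have : RCLike.re μ * r < 0 := by linarith
  exact neg_of_mul_neg_left this hr.le

end RCLike

lemma conjTranspose_map_ofReal (A : Matrix m n ℝ) :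
    (A.map Complex.ofReal)ᴴ = Aᵀ.map Complex.ofReal := by
  ext i j
  simp

lemma re_star_dotProduct_map_ofReal_mulVec [Fintype n] (P : Matrix n n ℝ) (x : n → ℂ) :
    (star x ⬝ᵥ (P.map Complex.ofReal *ᵥ x)).re =
      (fun i ↦ (x i).re) ⬝ᵥ (P *ᵥ fun i ↦ (x i).re) +
        (fun i ↦ (x i).im) ⬝ᵥ (P *ᵥ fun i ↦ (x i).im) := by
  simp only [dotProduct, mulVec, Pi.star_apply, map_apply, Complex.re_sum, Finset.mul_sum,
    Complex.mul_re, Complex.mul_im, Complex.ofReal_re, Complex.ofReal_im, RCLike.star_def,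
    Complex.conj_re, Complex.conj_im, ← Finset.sum_add_distrib]
  exact Finset.sum_congr rfl fun i _ ↦ Finset.sum_congr rfl fun j _ ↦ by ring

lemma PosDef.map_ofReal [Fintype n] {P : Matrix n n ℝ} (hP : P.PosDef) :
    (P.map Complex.ofReal).PosDef := by
  have hH : (P.map Complex.ofReal).IsHermitian :=
    hP.isHermitian.map _ fun r ↦ (Complex.conj_ofReal r).symm
  refine .of_dotProduct_mulVec_pos hH fun x hx ↦
    Complex.pos_iff.mpr ⟨?_, (hH.im_star_dotProduct_mulVec_self x).symm⟩
  rw [re_star_dotProduct_map_ofReal_mulVec]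
  have hnonneg (y : n → ℝ) : 0 ≤ y ⬝ᵥ (P *ᵥ y) := by
    simpa using hP.posSemidef.dotProduct_mulVec_nonneg y
  have hpos {y : n → ℝ} (hy : y ≠ 0) : 0 < y ⬝ᵥ (P *ᵥ y) := by
    simpa using hP.dotProduct_mulVec_pos hy
  by_cases hre : (fun i ↦ (x i).re) = 0
  · have him : (fun i ↦ (x i).im) ≠ 0 := fun him ↦
      hx (funext fun i ↦ Complex.ext (congrFun hre i) (congrFun him i))
    exact add_pos_of_nonneg_of_pos (hnonneg _) (hpos him)
  · exact add_pos_of_pos_of_nonneg (hpos hre) (hnonneg _)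

end Matrix

theorem lyapunov_eigenvalue_re_neg_general
    {m k : ℕ} (A P : Matrix (Fin m) (Fin m) ℝ) (B : Matrix (Fin m) (Fin k) ℝ)
    (hP : P.PosDef)
    (hLyap : A * P + P * Aᵀ + B * Bᵀ = 0)
    (lam : ℂ) (γ : Fin m → ℂ)
    (heig : (Aᵀ.map (Complex.ofReal)) *ᵥ γ = lam • γ)
    (hBγ : (Bᵀ.map (Complex.ofReal)) *ᵥ γ ≠ 0) :
    lam.re < 0 := by
  have hLyapℂ : A.map Complex.ofReal * P.map Complex.ofReal +
      P.map Complex.ofReal * (A.map Complex.ofReal)ᴴ +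
      B.map Complex.ofReal * (B.map Complex.ofReal)ᴴ = 0 := by
    have h := congrArg (Matrix.map · Complex.ofRealHom) hLyap
    simp only [Matrix.map_add _ (map_add Complex.ofRealHom), Matrix.map_mul,
      Matrix.map_zero _ (map_zero Complex.ofRealHom)] at h
    rwa [conjTranspose_map_ofReal, conjTranspose_map_ofReal]
  rw [← conjTranspose_map_ofReal] at heig hBγ
  exact re_lt_zero_of_lyapunov hP.map_ofReal hLyapℂ heig hBγ

theorem lyapunov_eigenvalue_re_neg
    {m k : ℕ} (A P : Matrix (Fin m) (Fin m) ℝ) (B : Matrix (Fin m) (Fin k) ℝ)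
    (hPsymm : P.IsSymm) (hP : P.PosDef)
    (hLyap : A * P + P * Aᵀ + B * Bᵀ = 0)
    (lam : ℂ) (γ : Fin m → ℂ) (hγ : γ ≠ 0)
    (heig : (Aᵀ.map (Complex.ofReal)) *ᵥ γ = lam • γ)
    (hBγ : (Bᵀ.map (Complex.ofReal)) *ᵥ γ ≠ 0) :
    lam.re < 0 :=
  lyapunov_eigenvalue_re_neg_general A P B hP hLyap lam γ heig hBγ
end

section
/- Let φ, ρ : ℝⁿ × ℝⁿ × ℝ → (0,∞) be C² with φ satisfying the backward equation ∂φ/∂t + v·∇_xφ + (−βv − (1/m)∇V)·∇_vφ + (σ²/2)Δ_vφ = 0, and ρ satisfying the controlled Fokker–Planck equation ∂ρ/∂t + v·∇_xρ + ∇_v·[(−βv − (1/m)∇V + σ²∇_v log φ)ρ] − (σ²/2)Δ_vρ = 0. Then φ̂ := ρ/φ satisfies the uncontrolled Fokker–Planck equation ∂φ̂/∂t + v·∇_x φ̂ + ∇_v·[(−βv − (1/m)∇V)φ̂] − (σ²/2)Δ_v φ̂ = 0. -/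
/-!
Write `φ̂ = ρ / φ`. Pointwise, the uncontrolled Fokker–Planck operator applied to `φ̂` equals
`1 / φ` times the controlled Fokker–Planck operator applied to `ρ` minus `ρ / φ²` times the
backward operator applied to `φ`, so it vanishes. For the first-order terms this is the quotient
rule. In each velocity coordinate, `∂ᵥ²(ρ / φ)` produces a cross term `∂ᵥφ ∂ᵥρ / φ²` and a term
in `(∂ᵥφ)²`; these are exactly what the control `σ² ∂ᵥ(log φ) ρ = σ² ρ ∂ᵥφ / φ` contributes
after division by `φ`.
-/

noncomputable def partialT {n : ℕ} (φ : (Fin n → ℝ) → (Fin n → ℝ) → ℝ → ℝ)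
    (x v : Fin n → ℝ) (t : ℝ) : ℝ :=
  deriv (fun s => φ x v s) t

noncomputable def partialX {n : ℕ} (φ : (Fin n → ℝ) → (Fin n → ℝ) → ℝ → ℝ)
    (x v : Fin n → ℝ) (t : ℝ) (i : Fin n) : ℝ :=
  deriv (fun s => φ (Function.update x i s) v t) (x i)

noncomputable def partialV {n : ℕ} (φ : (Fin n → ℝ) → (Fin n → ℝ) → ℝ → ℝ)
    (x v : Fin n → ℝ) (t : ℝ) (i : Fin n) : ℝ :=
  deriv (fun s => φ x (Function.update v i s) t) (v i)

noncomputable def laplacianV {n : ℕ} (φ : (Fin n → ℝ) → (Fin n → ℝ) → ℝ → ℝ)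
    (x v : Fin n → ℝ) (t : ℝ) : ℝ :=
  ∑ i, iteratedDeriv 2 (fun s => φ x (Function.update v i s) t) (v i)

noncomputable def divV {n : ℕ} (F : (Fin n → ℝ) → (Fin n → ℝ) → ℝ → Fin n → ℝ)
    (x v : Fin n → ℝ) (t : ℝ) : ℝ :=
  ∑ i, deriv (fun s => F x (Function.update v i s) t i) (v i)

lemma deriv_mul_div_sub_iteratedDeriv_two_div {b f h : ℝ → ℝ} {s : ℝ} (c : ℝ)
    (hb : DifferentiableAt ℝ b s) (hf : ContDiff ℝ 2 f) (hh : ContDiff ℝ 2 h)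
    (hf0 : ∀ u, f u ≠ 0) :
    deriv (fun u => b u * (h u / f u)) s - c / 2 * iteratedDeriv 2 (fun u => h u / f u) s
      = (deriv (fun u => (b u + c * deriv (fun w => Real.log (f w)) u) * h u) s
          - c / 2 * iteratedDeriv 2 h s) / f s
        - h s * (b s * deriv f s + c / 2 * iteratedDeriv 2 f s) / f s ^ 2 := by
  have df := hf.differentiable two_ne_zero
  have dh := hh.differentiable two_ne_zero
  have ddf := hf.differentiable_deriv_two s
  have ddh := hh.differentiable_deriv_two s
  have hquot : deriv (fun u => h u / f u)
      = fun u => (deriv h u * f u - h u * deriv f u) / f u ^ 2 :=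
    funext fun u => deriv_div (dh u) (df u) (hf0 u)
  have hlog : deriv (fun w => Real.log (f w)) = fun u => deriv f u / f u :=
    funext fun u => deriv.log (df u) (hf0 u)
  have h1 : HasDerivAt (fun u => b u * (h u / f u)) _ s :=
    hb.hasDerivAt.mul ((dh s).hasDerivAt.div (df s).hasDerivAt (hf0 s))
  have h2 : HasDerivAt (fun u => (deriv h u * f u - h u * deriv f u) / f u ^ 2) _ s :=
    ((ddh.hasDerivAt.mul (df s).hasDerivAt).sub ((dh s).hasDerivAt.mul ddf.hasDerivAt)).div
      ((df s).hasDerivAt.pow 2) (pow_ne_zero 2 (hf0 s))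
  have h3 : HasDerivAt (fun u => (b u + c * (deriv f u / f u)) * h u) _ s :=
    (hb.hasDerivAt.add ((ddf.hasDerivAt.div (df s).hasDerivAt (hf0 s)).const_mul c)).mul
      (dh s).hasDerivAt
  simp only [iteratedDeriv_succ, iteratedDeriv_zero, hquot, hlog, Pi.add_apply, Pi.sub_apply,
    Pi.mul_apply, Pi.div_apply, h1.deriv, h2.deriv, h3.deriv]
  have hfs := hf0 s
  field_simp
  ring

section Slices

variable {n : ℕ} {k : WithTop ℕ∞} {g : (Fin n → ℝ) → (Fin n → ℝ) → ℝ → ℝ}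

lemma ContDiff.sliceT
    (hg : ContDiff ℝ k (fun p : (Fin n → ℝ) × (Fin n → ℝ) × ℝ => g p.1 p.2.1 p.2.2))
    (x v : Fin n → ℝ) : ContDiff ℝ k (fun s => g x v s) :=
  hg.comp (contDiff_const.prodMk (contDiff_const.prodMk contDiff_id))

lemma ContDiff.sliceX
    (hg : ContDiff ℝ k (fun p : (Fin n → ℝ) × (Fin n → ℝ) × ℝ => g p.1 p.2.1 p.2.2))
    (x v : Fin n → ℝ) (t : ℝ) (i : Fin n) :
    ContDiff ℝ k (fun s => g (Function.update x i s) v t) :=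
  hg.comp ((contDiff_update k x i).prodMk (contDiff_const.prodMk contDiff_const))

lemma ContDiff.sliceV
    (hg : ContDiff ℝ k (fun p : (Fin n → ℝ) × (Fin n → ℝ) × ℝ => g p.1 p.2.1 p.2.2))
    (x v : Fin n → ℝ) (t : ℝ) (i : Fin n) :
    ContDiff ℝ k (fun s => g x (Function.update v i s) t) :=
  hg.comp (contDiff_const.prodMk ((contDiff_update k v i).prodMk contDiff_const))

end Slices

section QuotientRules

variable {n : ℕ} {φ ρ : (Fin n → ℝ) → (Fin n → ℝ) → ℝ → ℝ} {x v : Fin n → ℝ} {t : ℝ}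

lemma partialT_div (hρ : DifferentiableAt ℝ (fun s => ρ x v s) t)
    (hφ : DifferentiableAt ℝ (fun s => φ x v s) t) (hφ0 : φ x v t ≠ 0) :
    partialT (fun x v t => ρ x v t / φ x v t) x v t
      = partialT ρ x v t / φ x v t - ρ x v t * partialT φ x v t / φ x v t ^ 2 := by
  rw [partialT, deriv_fun_div hρ hφ hφ0, partialT, partialT]
  field_simp

lemma sum_mul_partialX_div (w : Fin n → ℝ)
    (hρ : ∀ i, DifferentiableAt ℝ (fun s => ρ (Function.update x i s) v t) (x i))
    (hφ : ∀ i, DifferentiableAt ℝ (fun s => φ (Function.update x i s) v t) (x i))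
    (hφ0 : φ x v t ≠ 0) :
    ∑ i, w i * partialX (fun x v t => ρ x v t / φ x v t) x v t i
      = (∑ i, w i * partialX ρ x v t i) / φ x v t
        - ρ x v t * (∑ i, w i * partialX φ x v t i) / φ x v t ^ 2 := by
  simp only [Finset.mul_sum, Finset.sum_div, ← Finset.sum_sub_distrib]
  refine Finset.sum_congr rfl fun i _ => ?_
  have hφi : φ (Function.update x i (x i)) v t ≠ 0 := by rwa [Function.update_eq_self]
  rw [partialX, deriv_fun_div (hρ i) (hφ i) hφi, partialX, partialX, Function.update_eq_self]
  field_simp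

lemma divV_sub_laplacianV_div (b : (Fin n → ℝ) → (Fin n → ℝ) → ℝ → Fin n → ℝ) (c : ℝ)
    (hb : ∀ i, DifferentiableAt ℝ (fun s => b x (Function.update v i s) t i) (v i))
    (hρ : ∀ i, ContDiff ℝ 2 (fun s => ρ x (Function.update v i s) t))
    (hφ : ∀ i, ContDiff ℝ 2 (fun s => φ x (Function.update v i s) t))
    (hφ0 : ∀ w, φ x w t ≠ 0) :
    divV (fun x v t i => b x v t i * (ρ x v t / φ x v t)) x v t
        - c / 2 * laplacianV (fun x v t => ρ x v t / φ x v t) x v t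
      = (divV (fun x v t i =>
            (b x v t i + c * partialV (fun x v t => Real.log (φ x v t)) x v t i) * ρ x v t) x v t
          - c / 2 * laplacianV ρ x v t) / φ x v t
        - ρ x v t * (∑ i, b x v t i * partialV φ x v t i + c / 2 * laplacianV φ x v t)
          / φ x v t ^ 2 := by
  simp only [divV, laplacianV, partialV, Function.update_idem, Function.update_self, mul_add,
    Finset.mul_sum, Finset.sum_div, ← Finset.sum_sub_distrib, ← Finset.sum_add_distrib]
  refine Finset.sum_congr rfl fun i _ => ?_
  have hcoord := deriv_mul_div_sub_iteratedDeriv_two_div c (hb i) (hφ i) (hρ i) (fun _ => hφ0 _)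
  simp only [Function.update_eq_self] at hcoord
  rw [hcoord]
  ring

end QuotientRules

theorem quotient_satisfies_uncontrolled_FokkerPlanck_general
    {n : ℕ} (β m σ : ℝ)
    (V : (Fin n → ℝ) → ℝ)
    (φ ρ : (Fin n → ℝ) → (Fin n → ℝ) → ℝ → ℝ)
    (hφsmooth : ContDiff ℝ 2 (fun p : (Fin n → ℝ) × (Fin n → ℝ) × ℝ => φ p.1 p.2.1 p.2.2))
    (hρsmooth : ContDiff ℝ 2 (fun p : (Fin n → ℝ) × (Fin n → ℝ) × ℝ => ρ p.1 p.2.1 p.2.2))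
    (hφpos : ∀ x v t, 0 < φ x v t)
    (hbackward : ∀ x v t, partialT φ x v t +
      (∑ i, v i * partialX φ x v t i) +
      (∑ i, (-β * v i - (1 / m) * partialX (fun x _ _ => V x) x v t i) * partialV φ x v t i) +
      (σ ^ 2 / 2) * laplacianV φ x v t = 0)
    (hFP : ∀ x v t, partialT ρ x v t +
      (∑ i, v i * partialX ρ x v t i) +
      divV (fun x v t i =>
        (-β * v i - (1 / m) * partialX (fun x _ _ => V x) x v t i +
          σ ^ 2 * partialV (fun x v t => Real.log (φ x v t)) x v t i) * ρ x v t) x v t -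
      (σ ^ 2 / 2) * laplacianV ρ x v t = 0) :
    ∀ x v t, partialT (fun x v t => ρ x v t / φ x v t) x v t +
      (∑ i, v i * partialX (fun x v t => ρ x v t / φ x v t) x v t i) +
      divV (fun x v t i =>
        (-β * v i - (1 / m) * partialX (fun x _ _ => V x) x v t i) *
          (ρ x v t / φ x v t)) x v t -
      (σ ^ 2 / 2) * laplacianV (fun x v t => ρ x v t / φ x v t) x v t = 0 := by
  intro x v t
  have hφ0 : ∀ x v t, φ x v t ≠ 0 := fun x v t => (hφpos x v t).ne'
  have hT := partialT_div ((hρsmooth.sliceT x v).differentiable two_ne_zero t)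
    ((hφsmooth.sliceT x v).differentiable two_ne_zero t) (hφ0 x v t)
  have hX := sum_mul_partialX_div v
    (fun i => (hρsmooth.sliceX x v t i).differentiable two_ne_zero (x i))
    (fun i => (hφsmooth.sliceX x v t i).differentiable two_ne_zero (x i)) (hφ0 x v t)
  have hV := divV_sub_laplacianV_div
    (fun x v t i => -β * v i - (1 / m) * partialX (fun x _ _ => V x) x v t i) (σ ^ 2)
    (fun i => by simp only [partialX, Function.update_self]; fun_prop)
    (hρsmooth.sliceV x v t) (hφsmooth.sliceV x v t) (hφ0 x · t)
  linear_combination hT + hX + hV + hFP x v t / φ x v t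
    - ρ x v t / φ x v t ^ 2 * hbackward x v t

theorem quotient_satisfies_uncontrolled_FokkerPlanck
    {n : ℕ} (β m σ : ℝ) (hβ : 0 < β) (hm : 0 < m) (hσ : 0 < σ)
    (V : (Fin n → ℝ) → ℝ) (hV : ContDiff ℝ 2 V)
    (φ ρ : (Fin n → ℝ) → (Fin n → ℝ) → ℝ → ℝ)
    (hφsmooth : ContDiff ℝ 2 (fun p : (Fin n → ℝ) × (Fin n → ℝ) × ℝ => φ p.1 p.2.1 p.2.2))
    (hρsmooth : ContDiff ℝ 2 (fun p : (Fin n → ℝ) × (Fin n → ℝ) × ℝ => ρ p.1 p.2.1 p.2.2))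
    (hφpos : ∀ x v t, 0 < φ x v t) (hρpos : ∀ x v t, 0 < ρ x v t)
    (hbackward : ∀ x v t, partialT φ x v t +
      (∑ i, v i * partialX φ x v t i) +
      (∑ i, (-β * v i - (1 / m) * partialX (fun x _ _ => V x) x v t i) * partialV φ x v t i) +
      (σ ^ 2 / 2) * laplacianV φ x v t = 0)
    (hFP : ∀ x v t, partialT ρ x v t +
      (∑ i, v i * partialX ρ x v t i) +
      divV (fun x v t i =>
        (-β * v i - (1 / m) * partialX (fun x _ _ => V x) x v t i +
          σ ^ 2 * partialV (fun x v t => Real.log (φ x v t)) x v t i) * ρ x v t) x v t -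
      (σ ^ 2 / 2) * laplacianV ρ x v t = 0) :
    ∀ x v t, partialT (fun x v t => ρ x v t / φ x v t) x v t +
      (∑ i, v i * partialX (fun x v t => ρ x v t / φ x v t) x v t i) +
      divV (fun x v t i =>
        (-β * v i - (1 / m) * partialX (fun x _ _ => V x) x v t i) *
          (ρ x v t / φ x v t)) x v t -
      (σ ^ 2 / 2) * laplacianV (fun x v t => ρ x v t / φ x v t) x v t = 0 :=
  quotient_satisfies_uncontrolled_FokkerPlanck_general β m σ V φ ρ hφsmooth hρsmooth hφpos hbackward
    hFP
end
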